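/- Let Z be a vector field on ℝ × TN satisfying L_Z ϖ_L = df for a smooth function f : ℝ × TN → ℝ. Then for each solution γ of the Euler–Lagrange equations, the function i(Z)ϖ_L − f is constant along the curve t ↦ (t, dγ(t)/dt). -/

import Mathlib

/-- **Generalized Noether theorem in Lagrangian formalism.**
`E` models the evolution space `ℝ × TN`, `ϖ` the Poincaré–Cartan 1-form `ϖ_L`,
`dϖ` its exterior derivative.  The vector field `Z` satisfies `L_Z ϖ = df`
for a smooth function `f` (expressed via Cartan's magic formula
`L_Z ϖ = i(Z)dϖ + d(i(Z)ϖ)`).  Then for every solution `γ` of the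
Euler–Lagrange equations (equivalently, by the Euler–Cartan theorem, every
curve `c : t ↦ (t, dγ(t)/dt)` whose velocity lies in the kernel of `dϖ`),
the function `i(Z)ϖ − f` is constant along `c`. -/
theorem noether_lagrangian_generalized
    {E : Type*} [NormedAddCommGroup E] [NormedSpace ℝ E]
    (ϖ : E → E →L[ℝ] ℝ) (dϖ : E → E →L[ℝ] E →L[ℝ] ℝ) (Z : E → E) (f : E → ℝ)
    (hϖ : ContDiff ℝ (⊤ : ℕ∞) ϖ) (hZ : ContDiff ℝ (⊤ : ℕ∞) Z) (hf : ContDiff ℝ (⊤ : ℕ∞) f)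
    -- `dϖ` is the exterior derivative of the 1-form `ϖ`
    (hd : ∀ x u v, dϖ x u v
      = fderiv ℝ (fun y => ϖ y v) x u - fderiv ℝ (fun y => ϖ y u) x v)
    -- `L_Z ϖ = d f`, i.e. `i(Z)dϖ + d(i(Z)ϖ) = df`
    (hsym : ∀ x v, dϖ x (Z x) v + fderiv ℝ (fun y => ϖ y (Z y)) x v
      = fderiv ℝ f x v)
    (t₀ t₁ : ℝ) (c : ℝ → E) (c' : ℝ → E)
    (hc : ∀ t ∈ Set.Icc t₀ t₁, HasDerivAt c (c' t) t)
    -- Euler–Cartan: the velocity of the prolonged motion is in the kernel of `dϖ`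
    (hEC : ∀ t ∈ Set.Icc t₀ t₁, ∀ v, dϖ (c t) (c' t) v = 0) :
    ∀ t ∈ Set.Icc t₀ t₁, ∀ s ∈ Set.Icc t₀ t₁,
      ϖ (c t) (Z (c t)) - f (c t) = ϖ (c s) (Z (c s)) - f (c s) := by

  intro t ht s hs
  -- the conserved quantity along the curve
  set g : ℝ → ℝ := fun u => ϖ (c u) (Z (c u)) - f (c u) with hg
  have hA : ContDiff ℝ (⊤ : ℕ∞) (fun y => ϖ y (Z y)) := hϖ.clm_apply hZ
  have key : ∀ u ∈ Set.Icc t₀ t₁, HasDerivAt g 0 u := by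
    intro u hu
    have h1 : HasDerivAt (fun w => ϖ (c w) (Z (c w)))
        (fderiv ℝ (fun y => ϖ y (Z y)) (c u) (c' u)) u :=
      ((hA.differentiable (by simp) (c u)).hasFDerivAt).comp_hasDerivAt u (hc u hu)
    have h2 : HasDerivAt (fun w => f (c w)) (fderiv ℝ f (c u) (c' u)) u :=
      ((hf.differentiable (by simp) (c u)).hasFDerivAt).comp_hasDerivAt u (hc u hu)
    have h3 := h1.sub h2
    have hzero : fderiv ℝ (fun y => ϖ y (Z y)) (c u) (c' u)
        - fderiv ℝ f (c u) (c' u) = 0 := by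
      have hs1 := hsym (c u) (c' u)
      have hanti : dϖ (c u) (Z (c u)) (c' u) = - dϖ (c u) (c' u) (Z (c u)) := by
        rw [hd, hd]; ring
      have hec := hEC u hu (Z (c u))
      rw [hanti, hec] at hs1
      linarith
    rw [hzero] at h3
    exact h3
  have hcont : ContinuousOn g (Set.Icc t₀ t₁) := fun u hu =>
    (key u hu).continuousAt.continuousWithinAt
  have hright : ∀ u ∈ Set.Ico t₀ t₁, HasDerivWithinAt g 0 (Set.Ici u) u := fun u hu =>
    (key u ⟨hu.1, le_of_lt hu.2⟩).hasDerivWithinAt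
  have hconst := constant_of_has_deriv_right_zero hcont hright
  have := hconst t ht
  have := hconst s hs
  show g t = g s
  linarith [hconst t ht, hconst s hs]
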